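/- arXiv:1412.2388 — 7 statements merged into one kernel-verified Lean document; each statement's English description precedes it below -/
import Mathlib

section
/- Let (X,f) be a dynamical system (f continuous on a metric space X) such that for every pair of nonempty open sets U, V there exists n ∈ ℕ with U ∩ f^{-n}(U) ≠ ∅ and U ∩ f^{-n}(V) ≠ ∅ simultaneously, i.e. N(U,U) ∩ N(U,V) ≠ ∅. Then for all nonempty open sets U_1, V_1, U_2, V_2 there exist nonempty open sets U_3, V_3 with N(U_3,V_3) ⊆ N(U_1,V_1) ∩ N(U_2,V_2). In particular (X,f) is weak mixing. -/
open Set Function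

private lemma prodmap_iter_13 {X : Type*} (f : X → X) (n : ℕ) (x y : X) :
    (Prod.map f f)^[n] (x, y) = (f^[n] x, f^[n] y) := by
  induction n with
  | zero => rfl
  | succ k ih =>
      rw [Function.iterate_succ_apply', ih, Function.iterate_succ_apply',
        Function.iterate_succ_apply']
      rfl

private lemma iter_comm_13 {X : Type*} (f : X → X) (a b : ℕ) (x : X) :
    f^[a] (f^[b] x) = f^[b] (f^[a] x) := by
  rw [← Function.iterate_add_apply, ← Function.iterate_add_apply, add_comm]

/-- Petersen's theorem: if `N(U,U) ∩ N(U,V) ≠ ∅` for all opene `U,V`, then for all opene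
`U₁,V₁,U₂,V₂` there are opene `U₃,V₃` with `N(U₃,V₃) ⊆ N(U₁,V₁) ∩ N(U₂,V₂)`; in
particular the system is weak mixing. -/
theorem stmt_13 (X : Type*) [MetricSpace X] (f : X → X) (hf : Continuous f)
    (h : ∀ U V : Set X, IsOpen U → U.Nonempty → IsOpen V → V.Nonempty →
      ∃ n : ℕ, (U ∩ f^[n] ⁻¹' U).Nonempty ∧ (U ∩ f^[n] ⁻¹' V).Nonempty) :
    (∀ U₁ V₁ U₂ V₂ : Set X, IsOpen U₁ → U₁.Nonempty → IsOpen V₁ → V₁.Nonempty →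
      IsOpen U₂ → U₂.Nonempty → IsOpen V₂ → V₂.Nonempty →
      ∃ U₃ V₃ : Set X, IsOpen U₃ ∧ U₃.Nonempty ∧ IsOpen V₃ ∧ V₃.Nonempty ∧
        ∀ n : ℕ, (U₃ ∩ f^[n] ⁻¹' V₃).Nonempty →
          (U₁ ∩ f^[n] ⁻¹' V₁).Nonempty ∧ (U₂ ∩ f^[n] ⁻¹' V₂).Nonempty) ∧
    (∀ U V : Set (X × X), IsOpen U → U.Nonempty → IsOpen V → V.Nonempty →
      ∃ n : ℕ, (U ∩ (Prod.map f f)^[n] ⁻¹' V).Nonempty) := by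
  have hopen : ∀ (n : ℕ) (V : Set X), IsOpen V → IsOpen (f^[n] ⁻¹' V) :=
    fun n V hV => hV.preimage (hf.iterate n)
  -- transitivity
  have htrans : ∀ U V : Set X, IsOpen U → U.Nonempty → IsOpen V → V.Nonempty →
      ∃ n, (U ∩ f^[n] ⁻¹' V).Nonempty := fun U V hU hUne hV hVne =>
    (h U V hU hUne hV hVne).imp fun _ hn => hn.2
  -- three-set lemma: ∃ n ∈ N(U,V) ∩ N(U,W)
  have h3 : ∀ U V W : Set X, IsOpen U → U.Nonempty → IsOpen V → V.Nonempty →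
      IsOpen W → W.Nonempty →
      ∃ n, (U ∩ f^[n] ⁻¹' V).Nonempty ∧ (U ∩ f^[n] ⁻¹' W).Nonempty := by
    intro U V W hU hUne hV hVne hW hWne
    obtain ⟨n₀, hAne, hBne⟩ := h U V hU hUne hV hVne
    set A := U ∩ f^[n₀] ⁻¹' U with hAdef
    set B := U ∩ f^[n₀] ⁻¹' V with hBdef
    have hAopen : IsOpen A := hU.inter (hopen n₀ U hU)
    have hBopen : IsOpen B := hU.inter (hopen n₀ V hV)
    obtain ⟨t, g, hgB, hgA⟩ := htrans B A hBopen hBne hAopen hAne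
    set G := B ∩ f^[t] ⁻¹' A with hGdef
    have hGopen : IsOpen G := hBopen.inter (hopen t A hAopen)
    obtain ⟨c, ⟨x, hxG, hxcG⟩, ⟨y, hyG, hycW⟩⟩ :=
      h G W hGopen ⟨g, hgB, hgA⟩ hW hWne
    -- A' = A ∩ f^[c]⁻¹' A is nonempty (witness f^[t] x)
    have hA'ne : (A ∩ f^[c] ⁻¹' A).Nonempty := by
      refine ⟨f^[t] x, hxG.2, ?_⟩
      have : f^[t] (f^[c] x) ∈ A := hxcG.2
      simpa [mem_preimage, iter_comm_13 f c t x] using this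
    have hB'ne : (B ∩ f^[c] ⁻¹' W).Nonempty := ⟨y, hyG.1, hycW⟩
    have hA'open : IsOpen (A ∩ f^[c] ⁻¹' A) := hAopen.inter (hopen c A hAopen)
    have hB'open : IsOpen (B ∩ f^[c] ⁻¹' W) := hBopen.inter (hopen c W hW)
    obtain ⟨k, z, hzA', hzB'⟩ := htrans _ _ hA'open hA'ne hB'open hB'ne
    have hzA : z ∈ A := hzA'.1
    have hzcA : f^[c] z ∈ A := hzA'.2
    have hzkB : f^[k] z ∈ B := hzB'.1
    have hzkcW : f^[c] (f^[k] z) ∈ W := hzB'.2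
    refine ⟨k, ⟨f^[n₀] z, hzA.2, ?_⟩, ⟨f^[c] z, hzcA.1, ?_⟩⟩
    · -- f^[k] (f^[n₀] z) ∈ V
      have : f^[n₀] (f^[k] z) ∈ V := hzkB.2
      simpa [mem_preimage, iter_comm_13 f k n₀ z] using this
    · -- f^[k] (f^[c] z) ∈ W
      simpa [mem_preimage, iter_comm_13 f k c z] using hzkcW
  -- four-set lemma: ∃ n ∈ N(A,B) ∩ N(C,D)
  have h4 : ∀ A B C D : Set X, IsOpen A → A.Nonempty → IsOpen B → B.Nonempty →
      IsOpen C → C.Nonempty → IsOpen D → D.Nonempty →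
      ∃ n, (A ∩ f^[n] ⁻¹' B).Nonempty ∧ (C ∩ f^[n] ⁻¹' D).Nonempty := by
    intro A B C D hA hAne hB hBne hC hCne hD hDne
    obtain ⟨r, ⟨e, heA, heC⟩, ⟨d, hdA, hdD⟩⟩ := h3 A C D hA hAne hC hCne hD hDne
    have hEopen : IsOpen (A ∩ f^[r] ⁻¹' C) := hA.inter (hopen r C hC)
    have hWopen : IsOpen (f^[r] ⁻¹' D) := hopen r D hD
    obtain ⟨k, ⟨z, hzE, hzB⟩, ⟨w, hwE, hwW⟩⟩ :=
      h3 (A ∩ f^[r] ⁻¹' C) B (f^[r] ⁻¹' D) hEopen ⟨e, heA, heC⟩ hB hBne hWopen ⟨d, hdD⟩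
    refine ⟨k, ⟨z, hzE.1, hzB⟩, ⟨f^[r] w, hwE.2, ?_⟩⟩
    have : f^[r] (f^[k] w) ∈ D := hwW
    simpa [mem_preimage, iter_comm_13 f k r w] using this
  constructor
  · intro U₁ V₁ U₂ V₂ hU₁ hU₁ne hV₁ hV₁ne hU₂ hU₂ne hV₂ hV₂ne
    obtain ⟨m, ⟨a, haU₁, haU₂⟩, ⟨b, hbV₁, hbV₂⟩⟩ :=
      h4 U₁ U₂ V₁ V₂ hU₁ hU₁ne hU₂ hU₂ne hV₁ hV₁ne hV₂ hV₂ne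
    refine ⟨U₁ ∩ f^[m] ⁻¹' U₂, V₁ ∩ f^[m] ⁻¹' V₂,
      hU₁.inter (hopen m U₂ hU₂), ⟨a, haU₁, haU₂⟩,
      hV₁.inter (hopen m V₂ hV₂), ⟨b, hbV₁, hbV₂⟩, ?_⟩
    rintro n ⟨x, ⟨hx1, hx2⟩, hfx⟩
    have hfx1 : f^[n] x ∈ V₁ := hfx.1
    have hfx2 : f^[m] (f^[n] x) ∈ V₂ := hfx.2
    refine ⟨⟨x, hx1, hfx1⟩, ⟨f^[m] x, hx2, ?_⟩⟩
    simpa [mem_preimage, iter_comm_13 f n m x] using hfx2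
  · intro U V hU hUne hV hVne
    obtain ⟨⟨u₁, u₂⟩, hu⟩ := hUne
    obtain ⟨⟨v₁, v₂⟩, hv⟩ := hVne
    obtain ⟨U₁, U₂, hU₁, hU₂, hu₁, hu₂, hUsub⟩ := isOpen_prod_iff.mp hU u₁ u₂ hu
    obtain ⟨V₁, V₂, hV₁, hV₂, hv₁, hv₂, hVsub⟩ := isOpen_prod_iff.mp hV v₁ v₂ hv
    obtain ⟨n, ⟨x, hxU₁, hxV₁⟩, ⟨y, hyU₂, hyV₂⟩⟩ :=
      h4 U₁ V₁ U₂ V₂ hU₁ ⟨u₁, hu₁⟩ hV₁ ⟨v₁, hv₁⟩ hU₂ ⟨u₂, hu₂⟩ hV₂ ⟨v₂, hv₂⟩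
    refine ⟨n, (x, y), hUsub ⟨hxU₁, hyU₂⟩, ?_⟩
    simp only [mem_preimage, prodmap_iter_13 f n x y]
    exact hVsub ⟨hxV₁, hyV₂⟩
end

section
/- If f is a continuous map on a metric space X and the induced system (2^X, f_*) is topologically transitive, then (X, f) is weak mixing. -/
/-!
Transitivity of `f_*`, applied to the Vietoris open sets `{A | A ⊆ U}` and
`{A | A meets V₁ and V₂}` (nonempty: they contain a singleton and a pair), shows that an open set
`U` has a common hitting time into any two open sets `V₁, V₂`; dually, any two open sets have a
common hitting time into an open set `V`. To hit `U₁ × U₂ → V₁ × V₂`, choose `n` such that `V₁`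
meets both `f⁻ⁿ V₂` and `f⁻ⁿ U₂`, then `m` hitting `V₁ ∩ f⁻ⁿ V₂` from both `U₁` and `f⁻ⁿ U₂`.
As `fᵐ` and `fⁿ` commute, `m` hits `V₁` from `U₁` and `V₂` from `U₂`.
-/

open TopologicalSpace Function Set

def IsTopologicallyTransitive {Y : Type*} [TopologicalSpace Y] (g : Y → Y) : Prop :=
  ∀ U V : Set Y, IsOpen U → U.Nonempty → IsOpen V → V.Nonempty →
    ∃ n : ℕ, (U ∩ g^[n] ⁻¹' V).Nonempty

def hittingTimes {Y : Type*} (g : Y → Y) (U V : Set Y) : Set ℕ :=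
  {n | (U ∩ g^[n] ⁻¹' V).Nonempty}

section HittingTimes

variable {Y Z : Type*} {g : Y → Y}

theorem hittingTimes_mono {U U' V V' : Set Y} (hU : U ⊆ U') (hV : V ⊆ V') :
    hittingTimes g U V ⊆ hittingTimes g U' V' :=
  fun _ hn ↦ hn.mono (inter_subset_inter hU (preimage_mono hV))

theorem hittingTimes_preimage_iterate_subset (k : ℕ) (U V : Set Y) :
    hittingTimes g (g^[k] ⁻¹' U) (g^[k] ⁻¹' V) ⊆ hittingTimes g U V := by
  rintro m ⟨z, hzU, hzV⟩
  refine ⟨g^[k] z, hzU, ?_⟩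
  rw [mem_preimage, (Commute.iterate_iterate_self g m k).eq z]
  exact hzV

theorem hittingTimes_prod (h : Z → Z) (U₁ V₁ : Set Y) (U₂ V₂ : Set Z) :
    hittingTimes (Prod.map g h) (U₁ ×ˢ U₂) (V₁ ×ˢ V₂) =
      hittingTimes g U₁ V₁ ∩ hittingTimes h U₂ V₂ := by
  ext n
  simp only [hittingTimes, mem_inter_iff, mem_ofPred_eq, Prod.map_iterate, preimage_prod_map_prod,
    prod_inter_prod, prod_nonempty_iff]

theorem isTopologicallyTransitive_prodMap [TopologicalSpace Y] [TopologicalSpace Z] {h : Z → Z}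
    (H : ∀ U₁ V₁ : Set Y, ∀ U₂ V₂ : Set Z, IsOpen U₁ → U₁.Nonempty → IsOpen V₁ → V₁.Nonempty →
      IsOpen U₂ → U₂.Nonempty → IsOpen V₂ → V₂.Nonempty →
      (hittingTimes g U₁ V₁ ∩ hittingTimes h U₂ V₂).Nonempty) :
    IsTopologicallyTransitive (Prod.map g h) := by
  intro U V hU ⟨⟨a, b⟩, hab⟩ hV ⟨⟨c, d⟩, hcd⟩
  obtain ⟨U₁, U₂, hU₁, hU₂, ha, hb, hUsub⟩ := isOpen_prod_iff.1 hU a b hab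
  obtain ⟨V₁, V₂, hV₁, hV₂, hc, hd, hVsub⟩ := isOpen_prod_iff.1 hV c d hcd
  have hn := H U₁ V₁ U₂ V₂ hU₁ ⟨a, ha⟩ hV₁ ⟨c, hc⟩ hU₂ ⟨b, hb⟩ hV₂ ⟨d, hd⟩
  rw [← hittingTimes_prod] at hn
  exact hn.mono (hittingTimes_mono hUsub hVsub)

end HittingTimes

section Hyperspace

variable {X : Type*} [TopologicalSpace X] {f : X → X} {F : NonemptyCompacts X → NonemptyCompacts X}

theorem coe_iterate_of_semiconj_image
    (hF : Semiconj ((↑) : NonemptyCompacts X → Set X) F (f '' ·)) (n : ℕ)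
    (A : NonemptyCompacts X) :
    (F^[n] A : Set X) = f^[n] '' A := by
  rw [image_iterate_eq]
  exact hF.iterate_right n A

theorem hittingTimes_inter_nonempty_same_source
    (hF : Semiconj ((↑) : NonemptyCompacts X → Set X) F (f '' ·))
    (hFt : IsTopologicallyTransitive F) {U V₁ V₂ : Set X} (hU : IsOpen U) (hU' : U.Nonempty)
    (hV₁ : IsOpen V₁) (hV₁' : V₁.Nonempty) (hV₂ : IsOpen V₂) (hV₂' : V₂.Nonempty) :
    (hittingTimes f U V₁ ∩ hittingTimes f U V₂).Nonempty := by
  obtain ⟨u, hu⟩ := hU'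
  obtain ⟨v₁, hv₁⟩ := hV₁'
  obtain ⟨v₂, hv₂⟩ := hV₂'
  obtain ⟨n, A, hAU, hAV₁, hAV₂⟩ := hFt {A | ↑A ⊆ U}
    ({A | (↑A ∩ V₁).Nonempty} ∩ {A | (↑A ∩ V₂).Nonempty})
    (NonemptyCompacts.isOpen_subsets_of_isOpen hU) ⟨{u}, by simpa using hu⟩
    ((NonemptyCompacts.isOpen_inter_nonempty_of_isOpen hV₁).inter
      (NonemptyCompacts.isOpen_inter_nonempty_of_isOpen hV₂))
    ⟨{v₁} ⊔ {v₂}, ⟨v₁, by simp, hv₁⟩, ⟨v₂, by simp, hv₂⟩⟩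
  simp only [mem_ofPred_eq, coe_iterate_of_semiconj_image hF, image_inter_nonempty_iff] at hAV₁ hAV₂
  exact ⟨n, hittingTimes_mono hAU subset_rfl hAV₁, hittingTimes_mono hAU subset_rfl hAV₂⟩

theorem hittingTimes_inter_nonempty_same_target
    (hF : Semiconj ((↑) : NonemptyCompacts X → Set X) F (f '' ·))
    (hFt : IsTopologicallyTransitive F) {U₁ U₂ V : Set X} (hU₁ : IsOpen U₁)
    (hU₁' : U₁.Nonempty) (hU₂ : IsOpen U₂) (hU₂' : U₂.Nonempty) (hV : IsOpen V) (hV' : V.Nonempty) :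
    (hittingTimes f U₁ V ∩ hittingTimes f U₂ V).Nonempty := by
  obtain ⟨u₁, hu₁⟩ := hU₁'
  obtain ⟨u₂, hu₂⟩ := hU₂'
  obtain ⟨v, hv⟩ := hV'
  obtain ⟨n, A, ⟨hAU₁, hAU₂⟩, hAV⟩ := hFt ({A | (↑A ∩ U₁).Nonempty} ∩ {A | (↑A ∩ U₂).Nonempty})
    {A | ↑A ⊆ V}
    ((NonemptyCompacts.isOpen_inter_nonempty_of_isOpen hU₁).inter
      (NonemptyCompacts.isOpen_inter_nonempty_of_isOpen hU₂))
    ⟨{u₁} ⊔ {u₂}, ⟨u₁, by simp, hu₁⟩, ⟨u₂, by simp, hu₂⟩⟩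
    (NonemptyCompacts.isOpen_subsets_of_isOpen hV) ⟨{v}, by simpa using hv⟩
  simp only [mem_preimage, mem_ofPred_eq, coe_iterate_of_semiconj_image hF, image_subset_iff]
    at hAV
  obtain ⟨x, hxA, hxU₁⟩ := hAU₁
  obtain ⟨y, hyA, hyU₂⟩ := hAU₂
  exact ⟨n, ⟨x, hxU₁, hAV hxA⟩, ⟨y, hyU₂, hAV hyA⟩⟩

theorem hittingTimes_inter_nonempty_of_hyperspace
    (hF : Semiconj ((↑) : NonemptyCompacts X → Set X) F (f '' ·))
    (hFt : IsTopologicallyTransitive F) (hf : Continuous f) {U₁ V₁ U₂ V₂ : Set X}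
    (hU₁ : IsOpen U₁) (hU₁' : U₁.Nonempty) (hV₁ : IsOpen V₁) (hV₁' : V₁.Nonempty)
    (hU₂ : IsOpen U₂) (hU₂' : U₂.Nonempty) (hV₂ : IsOpen V₂) (hV₂' : V₂.Nonempty) :
    (hittingTimes f U₁ V₁ ∩ hittingTimes f U₂ V₂).Nonempty := by
  obtain ⟨n, hn₁, hn₂⟩ :=
    hittingTimes_inter_nonempty_same_source hF hFt hV₁ hV₁' hV₂ hV₂' hU₂ hU₂'
  obtain ⟨m, hm₁, hm₂⟩ := hittingTimes_inter_nonempty_same_target hF hFt hU₁ hU₁'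
    ((hf.iterate n).isOpen_preimage _ hU₂) (hn₂.mono inter_subset_right)
    (hV₁.inter ((hf.iterate n).isOpen_preimage _ hV₂)) hn₁
  exact ⟨m, hittingTimes_mono subset_rfl inter_subset_left hm₁,
    hittingTimes_preimage_iterate_subset n U₂ V₂
      (hittingTimes_mono subset_rfl inter_subset_right hm₂)⟩

theorem isTopologicallyTransitive_prodMap_of_hyperspace
    (hF : Semiconj ((↑) : NonemptyCompacts X → Set X) F (f '' ·))
    (hFt : IsTopologicallyTransitive F) (hf : Continuous f) :
    IsTopologicallyTransitive (Prod.map f f) :=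
  isTopologicallyTransitive_prodMap fun _ _ _ _ hU₁ hU₁' hV₁ hV₁' hU₂ hU₂' hV₂ hV₂' ↦
    hittingTimes_inter_nonempty_of_hyperspace hF hFt hf hU₁ hU₁' hV₁ hV₁' hU₂ hU₂' hV₂ hV₂'

end Hyperspace

/-- If the induced system `(2^X, f_*)` is topologically transitive then `(X,f)` is weak
mixing. -/
theorem stmt_14 (X : Type*) [MetricSpace X] (f : X → X) (hf : Continuous f)
    (F : NonemptyCompacts X → NonemptyCompacts X)
    (hF : ∀ A : NonemptyCompacts X, (F A : Set X) = f '' (A : Set X))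
    (htrans : ∀ U V : Set (NonemptyCompacts X), IsOpen U → U.Nonempty →
      IsOpen V → V.Nonempty → ∃ n : ℕ, (U ∩ F^[n] ⁻¹' V).Nonempty) :
    ∀ U V : Set (X × X), IsOpen U → U.Nonempty → IsOpen V → V.Nonempty →
      ∃ n : ℕ, (U ∩ (Prod.map f f)^[n] ⁻¹' V).Nonempty :=
  isTopologicallyTransitive_prodMap_of_hyperspace hF htrans hf
end

section
/- If (X,f) is weak mixing, with X a compact metric space, then the induced system (2^X, f_*) is topologically transitive (in fact weak mixing). -/
open TopologicalSpace Set Metric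

section Aux

variable {X : Type*} [MetricSpace X]

/-- Furstenberg's intersection trick: condensing a finite family of "hitting time" conditions
into a single one. -/
private lemma key' (f : X → X) (hf : Continuous f)
    (hwm : ∀ U V : Set (X × X), IsOpen U → U.Nonempty → IsOpen V → V.Nonempty →
      ∃ n : ℕ, (U ∩ (Prod.map f f)^[n] ⁻¹' V).Nonempty)
    [Nonempty X] {ι : Type*} [DecidableEq ι] (I : Finset ι) (U V : ι → Set X)
    (hUo : ∀ i ∈ I, IsOpen (U i)) (hUne : ∀ i ∈ I, (U i).Nonempty)
    (hVo : ∀ i ∈ I, IsOpen (V i)) (hVne : ∀ i ∈ I, (V i).Nonempty) :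
    ∃ U' V' : Set X, IsOpen U' ∧ U'.Nonempty ∧ IsOpen V' ∧ V'.Nonempty ∧
      ∀ n, (U' ∩ f^[n] ⁻¹' V').Nonempty → ∀ i ∈ I, (U i ∩ f^[n] ⁻¹' V i).Nonempty := by
  classical
  revert hUo hUne hVo hVne
  induction I using Finset.induction_on with
  | empty =>
    exact fun _ _ _ _ => ⟨univ, univ, isOpen_univ, univ_nonempty, isOpen_univ, univ_nonempty,
      fun n _ i hi => absurd hi (Finset.notMem_empty i)⟩
  | @insert a I ha IH =>
    intro hUo hUne hVo hVne
    obtain ⟨U', V', hU'o, hU'ne, hV'o, hV'ne, hprop⟩ :=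
      IH (fun i hi => hUo i (Finset.mem_insert_of_mem hi))
        (fun i hi => hUne i (Finset.mem_insert_of_mem hi))
        (fun i hi => hVo i (Finset.mem_insert_of_mem hi))
        (fun i hi => hVne i (Finset.mem_insert_of_mem hi))
    have haU : IsOpen (U a) := hUo a (Finset.mem_insert_self a I)
    have haV : IsOpen (V a) := hVo a (Finset.mem_insert_self a I)
    obtain ⟨n, ⟨x, v⟩, hx, hfx⟩ := hwm (U a ×ˢ V a) (U' ×ˢ V')
      (haU.prod haV) ((hUne a (Finset.mem_insert_self a I)).prod
        (hVne a (Finset.mem_insert_self a I)))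
      (hU'o.prod hV'o) (hU'ne.prod hV'ne)
    rw [Set.mem_preimage, Prod.map_iterate] at hfx
    obtain ⟨hx1, hx2⟩ := hx
    obtain ⟨hfx1, hfx2⟩ := hfx
    refine ⟨U a ∩ f^[n] ⁻¹' U', V a ∩ f^[n] ⁻¹' V',
      haU.inter ((hf.iterate n).isOpen_preimage U' hU'o),
      ⟨x, hx1, hfx1⟩,
      haV.inter ((hf.iterate n).isOpen_preimage V' hV'o),
      ⟨v, hx2, hfx2⟩, ?_⟩
    intro m ⟨z, ⟨hzU, hznU'⟩, hzV, hznV'⟩ i hi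
    rcases Finset.mem_insert.1 hi with rfl | hi
    · exact ⟨z, hzU, hzV⟩
    · refine hprop m ⟨f^[n] z, hznU', ?_⟩ i hi
      show f^[m] (f^[n] z) ∈ V'
      rw [← Function.iterate_add_apply, Nat.add_comm, Function.iterate_add_apply]
      exact hznV'

/-- Weak mixing gives simultaneous hitting times for any finite family of pairs of
nonempty open sets. -/
private lemma key (f : X → X) (hf : Continuous f)
    (hwm : ∀ U V : Set (X × X), IsOpen U → U.Nonempty → IsOpen V → V.Nonempty →
      ∃ n : ℕ, (U ∩ (Prod.map f f)^[n] ⁻¹' V).Nonempty)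
    {U' V' : Set X} (hU'o : IsOpen U') (hU'ne : U'.Nonempty)
    (hV'o : IsOpen V') (hV'ne : V'.Nonempty) :
    ∃ n : ℕ, (U' ∩ f^[n] ⁻¹' V').Nonempty := by
  obtain ⟨n, ⟨x, y⟩, ⟨hx1, _⟩, hfx⟩ := hwm (U' ×ˢ U') (V' ×ˢ V')
    (hU'o.prod hU'o) (hU'ne.prod hU'ne) (hV'o.prod hV'o) (hV'ne.prod hV'ne)
  rw [Set.mem_preimage, Prod.map_iterate] at hfx
  exact ⟨n, x, hx1, hfx.1⟩

private lemma iterF (f : X → X) (F : NonemptyCompacts X → NonemptyCompacts X)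
    (hF : ∀ A : NonemptyCompacts X, (F A : Set X) = f '' (A : Set X))
    (n : ℕ) (A : NonemptyCompacts X) : (F^[n] A : Set X) = f^[n] '' (A : Set X) := by
  induction n with
  | zero => simp
  | succ n ih =>
    rw [Function.iterate_succ_apply', hF, ih, Function.iterate_succ', Set.image_comp]

/-- Key reduction: for open nonempty sets `U V` in the hyperspace, there are open nonempty
sets `U' V'` in `X` such that any hitting time for `(U', V')` is a hitting time for `(U, V)`. -/
private lemma hyperLift (f : X → X) (hf : Continuous f)
    (hwm : ∀ U V : Set (X × X), IsOpen U → U.Nonempty → IsOpen V → V.Nonempty →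
      ∃ n : ℕ, (U ∩ (Prod.map f f)^[n] ⁻¹' V).Nonempty)
    (F : NonemptyCompacts X → NonemptyCompacts X)
    (hF : ∀ A : NonemptyCompacts X, (F A : Set X) = f '' (A : Set X))
    (U V : Set (NonemptyCompacts X)) (hUo : IsOpen U) (hUne : U.Nonempty)
    (hVo : IsOpen V) (hVne : V.Nonempty) :
    ∃ U' V' : Set X, IsOpen U' ∧ U'.Nonempty ∧ IsOpen V' ∧ V'.Nonempty ∧
      ∀ n, (U' ∩ f^[n] ⁻¹' V').Nonempty → (U ∩ F^[n] ⁻¹' V).Nonempty := by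
  classical
  obtain ⟨K, hKU⟩ := hUne
  obtain ⟨K', hK'V⟩ := hVne
  haveI : Nonempty X := ⟨K.nonempty.some⟩
  obtain ⟨ε, hε, hballU⟩ := Metric.isOpen_iff.1 hUo K hKU
  obtain ⟨δ, hδ, hballV⟩ := Metric.isOpen_iff.1 hVo K' hK'V
  obtain ⟨s, hsK, hsfin, hscov⟩ :=
    finite_cover_balls_of_compact K.isCompact (by positivity : (0:ℝ) < ε/4)
  obtain ⟨t, htK, htfin, htcov⟩ :=
    finite_cover_balls_of_compact K'.isCompact (by positivity : (0:ℝ) < δ/4)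
  obtain ⟨x₀, hx₀s, -⟩ := Set.mem_iUnion₂.1 (hscov K.nonempty.some_mem)
  obtain ⟨y₀, hy₀t, -⟩ := Set.mem_iUnion₂.1 (htcov K'.nonempty.some_mem)
  set I : Finset (X × X) := hsfin.toFinset ×ˢ htfin.toFinset with hI
  have memI : ∀ p : X × X, p ∈ I ↔ p.1 ∈ s ∧ p.2 ∈ t := by
    intro p; simp [hI, Finset.mem_product, hsfin.mem_toFinset, htfin.mem_toFinset]
  obtain ⟨U', V', hU'o, hU'ne, hV'o, hV'ne, hprop⟩ :=
    key' f hf hwm I (fun p => ball p.1 (ε/4)) (fun p => ball p.2 (δ/4))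
      (fun p _ => isOpen_ball) (fun p _ => ⟨p.1, mem_ball_self (by positivity)⟩)
      (fun p _ => isOpen_ball) (fun p _ => ⟨p.2, mem_ball_self (by positivity)⟩)
  refine ⟨U', V', hU'o, hU'ne, hV'o, hV'ne, ?_⟩
  intro n hn
  have hall := hprop n hn
  -- choose, for each pair (x,y) ∈ s × t, a point in `ball x (ε/4)` mapped into `ball y (δ/4)`
  set g : X × X → X := fun p =>
    if hp : (ball p.1 (ε/4) ∩ f^[n] ⁻¹' ball p.2 (δ/4)).Nonempty then hp.some
    else Classical.arbitrary X with hg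
  have hgmem : ∀ p ∈ I, g p ∈ ball p.1 (ε/4) ∩ f^[n] ⁻¹' ball p.2 (δ/4) := by
    intro p hp
    have h := hall p hp
    simp only [hg, dif_pos h]
    exact h.some_mem
  set C : Set X := g '' (I : Set (X × X)) with hC
  have hCfin : C.Finite := (I.finite_toSet).image g
  have hCne : C.Nonempty := ⟨g (x₀, y₀), Set.mem_image_of_mem g (by
    simpa using (memI (x₀, y₀)).2 ⟨hx₀s, hy₀t⟩)⟩
  set Ccpt : NonemptyCompacts X := ⟨⟨C, hCfin.isCompact⟩, hCne⟩ with hCc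
  have hCU : Ccpt ∈ U := by
    apply hballU
    rw [Metric.mem_ball, NonemptyCompacts.dist_eq]
    have h1 : ∀ z ∈ C, ∃ w ∈ (K : Set X), dist z w ≤ ε/2 := by
      rintro z ⟨p, hp, rfl⟩
      have hp' : p ∈ I := hp
      have := (hgmem p hp').1
      rw [mem_ball] at this
      exact ⟨p.1, hsK ((memI p).1 hp').1, by linarith [this]⟩
    have h2 : ∀ w ∈ (K : Set X), ∃ z ∈ C, dist w z ≤ ε/2 := by
      intro w hw
      obtain ⟨x, hxs, hwx⟩ := Set.mem_iUnion₂.1 (hscov hw)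
      rw [mem_ball] at hwx
      have hpI : (x, y₀) ∈ I := (memI (x, y₀)).2 ⟨hxs, hy₀t⟩
      refine ⟨g (x, y₀), Set.mem_image_of_mem g hpI, ?_⟩
      have := (hgmem (x, y₀) hpI).1
      rw [mem_ball] at this
      calc dist w (g (x, y₀)) ≤ dist w x + dist (g (x,y₀)) x := by
            rw [dist_comm (g (x,y₀)) x]; exact dist_triangle _ _ _
        _ ≤ ε/2 := by linarith
    calc Metric.hausdorffDist (Ccpt : Set X) (K : Set X) ≤ ε/2 :=
          Metric.hausdorffDist_le_of_mem_dist (by positivity) h1 h2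
      _ < ε := by linarith
  have hCV : F^[n] Ccpt ∈ V := by
    apply hballV
    rw [Metric.mem_ball, NonemptyCompacts.dist_eq, iterF f F hF]
    have h1 : ∀ z ∈ f^[n] '' C, ∃ w ∈ (K' : Set X), dist z w ≤ δ/2 := by
      rintro z ⟨c, ⟨p, hp, rfl⟩, rfl⟩
      have hp' : p ∈ I := hp
      have := (hgmem p hp').2
      rw [Set.mem_preimage, mem_ball] at this
      exact ⟨p.2, htK ((memI p).1 hp').2, by linarith [this]⟩
    have h2 : ∀ w ∈ (K' : Set X), ∃ z ∈ f^[n] '' C, dist w z ≤ δ/2 := by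
      intro w hw
      obtain ⟨y, hyt, hwy⟩ := Set.mem_iUnion₂.1 (htcov hw)
      rw [mem_ball] at hwy
      have hpI : (x₀, y) ∈ I := (memI (x₀, y)).2 ⟨hx₀s, hyt⟩
      refine ⟨f^[n] (g (x₀, y)),
        Set.mem_image_of_mem _ (Set.mem_image_of_mem g hpI), ?_⟩
      have := (hgmem (x₀, y) hpI).2
      rw [Set.mem_preimage, mem_ball] at this
      calc dist w (f^[n] (g (x₀, y)))
            ≤ dist w y + dist (f^[n] (g (x₀,y))) y := by
              rw [dist_comm (f^[n] (g (x₀,y))) y]; exact dist_triangle _ _ _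
        _ ≤ δ/2 := by linarith
    calc Metric.hausdorffDist (f^[n] '' C) (K' : Set X) ≤ δ/2 :=
          Metric.hausdorffDist_le_of_mem_dist (by positivity) h1 h2
      _ < δ := by linarith
  exact ⟨Ccpt, hCU, hCV⟩

end Aux

/-- If `(X,f)` is weak mixing, with `X` a compact metric space, then the induced system
`(2^X, f_*)` is topologically transitive (in fact weak mixing). -/
theorem stmt_15 (X : Type*) [MetricSpace X] [CompactSpace X] (f : X → X) (hf : Continuous f)
    (F : NonemptyCompacts X → NonemptyCompacts X)
    (hF : ∀ A : NonemptyCompacts X, (F A : Set X) = f '' (A : Set X))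
    (hwm : ∀ U V : Set (X × X), IsOpen U → U.Nonempty → IsOpen V → V.Nonempty →
      ∃ n : ℕ, (U ∩ (Prod.map f f)^[n] ⁻¹' V).Nonempty) :
    (∀ U V : Set (NonemptyCompacts X), IsOpen U → U.Nonempty → IsOpen V → V.Nonempty →
      ∃ n : ℕ, (U ∩ F^[n] ⁻¹' V).Nonempty) ∧
    (∀ U V : Set (NonemptyCompacts X × NonemptyCompacts X),
      IsOpen U → U.Nonempty → IsOpen V → V.Nonempty →
      ∃ n : ℕ, (U ∩ (Prod.map F F)^[n] ⁻¹' V).Nonempty) := by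
  constructor
  · intro U V hUo hUne hVo hVne
    obtain ⟨U', V', hU'o, hU'ne, hV'o, hV'ne, hprop⟩ :=
      hyperLift f hf hwm F hF U V hUo hUne hVo hVne
    obtain ⟨n, hn⟩ := key f hf hwm hU'o hU'ne hV'o hV'ne
    exact ⟨n, hprop n hn⟩
  · intro W W' hWo hWne hW'o hW'ne
    obtain ⟨⟨A, B⟩, hAB⟩ := hWne
    obtain ⟨⟨A', B'⟩, hA'B'⟩ := hW'ne
    obtain ⟨U1, U2, hU1o, hU2o, hA1, hB2, hsub⟩ := isOpen_prod_iff.1 hWo A B hAB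
    obtain ⟨V1, V2, hV1o, hV2o, hA'1, hB'2, hsub'⟩ := isOpen_prod_iff.1 hW'o A' B' hA'B'
    obtain ⟨P1, Q1, hP1o, hP1ne, hQ1o, hQ1ne, hprop1⟩ :=
      hyperLift f hf hwm F hF U1 V1 hU1o ⟨A, hA1⟩ hV1o ⟨A', hA'1⟩
    obtain ⟨P2, Q2, hP2o, hP2ne, hQ2o, hQ2ne, hprop2⟩ :=
      hyperLift f hf hwm F hF U2 V2 hU2o ⟨B, hB2⟩ hV2o ⟨B', hB'2⟩
    obtain ⟨n, ⟨x, y⟩, ⟨hx, hy⟩, hfxy⟩ := hwm (P1 ×ˢ P2) (Q1 ×ˢ Q2)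
      (hP1o.prod hP2o) (hP1ne.prod hP2ne) (hQ1o.prod hQ2o) (hQ1ne.prod hQ2ne)
    rw [Set.mem_preimage, Prod.map_iterate] at hfxy
    obtain ⟨C1, hC1U, hC1V⟩ := hprop1 n ⟨x, hx, hfxy.1⟩
    obtain ⟨C2, hC2U, hC2V⟩ := hprop2 n ⟨y, hy, hfxy.2⟩
    refine ⟨n, (C1, C2), hsub ⟨hC1U, hC2U⟩, ?_⟩
    rw [Set.mem_preimage, Prod.map_iterate]
    exact hsub' ⟨hC1V, hC2V⟩
end

section
/- Let C be a transitive point for (2^X, f_*), where X is a complete separable perfect metric space and f is continuous. If g is a continuous self-map of X commuting with f and C ∩ g(C) ≠ ∅, then g is the identity map on X. -/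
open TopologicalSpace Filter

/-- If `C` is a transitive point of `(2^X, f_*)`, `X` a complete separable perfect metric
space, `g` is continuous, commutes with `f`, and `C ∩ g(C) ≠ ∅`, then `g = id`. -/
theorem stmt_16 (X : Type*) [MetricSpace X] [CompleteSpace X]
    [TopologicalSpace.SeparableSpace X] (hperf : ∀ x : X, (nhdsWithin x {x}ᶜ).NeBot)
    (f : X → X) (hf : Continuous f)
    (F : NonemptyCompacts X → NonemptyCompacts X)
    (hF : ∀ A : NonemptyCompacts X, (F A : Set X) = f '' (A : Set X))
    (C : NonemptyCompacts X) (hC : Dense (Set.range fun n : ℕ => F^[n] C))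
    (g : X → X) (hg : Continuous g) (hcomm : f ∘ g = g ∘ f)
    (hint : ((C : Set X) ∩ g '' (C : Set X)).Nonempty) :
    g = id := by
  -- iterates of F are images under iterates of f
  have hFn : ∀ n : ℕ, ((F^[n] C : NonemptyCompacts X) : Set X) = f^[n] '' (C : Set X) := by
    intro n
    induction n with
    | zero => simp
    | succ n ih =>
      rw [Function.iterate_succ_apply', hF, ih, Function.iterate_succ', Set.image_comp]
  obtain ⟨x₀, hx₀C, y₀, hy₀C, hgy₀⟩ := hint
  funext a
  simp only [id_eq]
  by_contra hga
  have hδ : 0 < dist (g a) a := dist_pos.mpr hga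
  set δ := dist (g a) a with hδdef
  -- continuity of g at a
  obtain ⟨ε, hε, hεg⟩ := (Metric.continuous_iff.mp hg) a (δ/3) (by linarith)
  set ε' := min ε (δ/3) with hε'def
  have hε' : 0 < ε' := lt_min hε (by linarith)
  -- singleton as a NonemptyCompacts
  set S : NonemptyCompacts X := ⟨⟨{a}, isCompact_singleton⟩, Set.singleton_nonempty a⟩ with hS
  obtain ⟨_, ⟨n, rfl⟩, hn⟩ := Metric.mem_closure_iff.mp (hC S) ε' hε'
  -- Hausdorff distance bound
  have hfin : EMetric.hausdorffEdist ((F^[n] C : NonemptyCompacts X) : Set X) (S : Set X) ≠ ⊤ :=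
    Metric.hausdorffEdist_ne_top_of_nonempty_of_bounded (F^[n] C).nonempty S.nonempty
      (F^[n] C).isCompact.isBounded S.isCompact.isBounded
  have hclose : ∀ x ∈ ((F^[n] C : NonemptyCompacts X) : Set X), dist x a < ε' := by
    intro x hx
    have h1 : Metric.infDist x (S : Set X) ≤ Metric.hausdorffDist
        ((F^[n] C : NonemptyCompacts X) : Set X) (S : Set X) :=
      Metric.infDist_le_hausdorffDist_of_mem hx hfin
    have h2 : Metric.infDist x (S : Set X) = dist x a := by
      simp [hS, Metric.infDist_singleton]
    have h3 : Metric.hausdorffDist ((F^[n] C : NonemptyCompacts X) : Set X) (S : Set X) < ε' := by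
      rw [← Metric.NonemptyCompacts.dist_eq]; rw [dist_comm] at hn; exact hn
    linarith
  have hx₀n : f^[n] x₀ ∈ ((F^[n] C : NonemptyCompacts X) : Set X) := by
    rw [hFn]; exact ⟨x₀, hx₀C, rfl⟩
  have hy₀n : f^[n] y₀ ∈ ((F^[n] C : NonemptyCompacts X) : Set X) := by
    rw [hFn]; exact ⟨y₀, hy₀C, rfl⟩
  have hcomm' : f^[n] (g y₀) = g (f^[n] y₀) := by
    have : Function.Commute f g := funext_iff.mp hcomm
    exact (this.iterate_left n) y₀
  have h1 : dist (f^[n] x₀) a < δ/3 := lt_of_lt_of_le (hclose _ hx₀n) (min_le_right _ _)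
  have h2 : dist (f^[n] y₀) a < ε := lt_of_lt_of_le (hclose _ hy₀n) (min_le_left _ _)
  have h3 : dist (g (f^[n] y₀)) (g a) < δ/3 := hεg _ h2
  have h4 : f^[n] x₀ = g (f^[n] y₀) := by rw [← hcomm', ← hgy₀]
  have h5 : dist (g (f^[n] y₀)) a < δ/3 := h4 ▸ h1
  linarith [dist_triangle (g a) (g (f^[n] y₀)) a, dist_comm (g a) (g (f^[n] y₀))]
end

section
/- Let C be a transitive point for (2^X, f_*) with X a complete separable perfect metric space. Then every point x ∈ C is a transitive point for (X, f), i.e. its forward orbit is dense in X. -/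
open TopologicalSpace

/-- If `C` is a transitive point of `(2^X, f_*)`, `X` a complete separable perfect metric
space, then every point of `C` is a transitive point of `(X, f)`. -/
theorem stmt_17 (X : Type*) [MetricSpace X] [CompleteSpace X]
    [TopologicalSpace.SeparableSpace X] (hperf : ∀ x : X, (nhdsWithin x {x}ᶜ).NeBot)
    (f : X → X) (hf : Continuous f)
    (F : NonemptyCompacts X → NonemptyCompacts X)
    (hF : ∀ A : NonemptyCompacts X, (F A : Set X) = f '' (A : Set X))
    (C : NonemptyCompacts X) (hC : Dense (Set.range fun n : ℕ => F^[n] C)) :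
    ∀ x ∈ (C : Set X), Dense (Set.range fun n : ℕ => f^[n] x) := by
  have key : ∀ n : ℕ, (F^[n] C : Set X) = f^[n] '' (C : Set X) := by
    intro n
    induction n with
    | zero => simp
    | succ n ih =>
      rw [Function.iterate_succ_apply' F, hF, ih, Set.image_image]
      simp [← Function.iterate_succ_apply' f]
  intro x hx
  rw [Metric.dense_iff]
  intro y r hr
  set Y : NonemptyCompacts X := ⟨⟨{y}, isCompact_singleton⟩, Set.singleton_nonempty y⟩
  obtain ⟨A, hA1, hA2⟩ := (Metric.dense_iff.1 hC) Y r hr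
  obtain ⟨n, rfl⟩ := hA2
  refine ⟨f^[n] x, ?_, ⟨n, rfl⟩⟩
  have hmem : f^[n] x ∈ (F^[n] C : Set X) := by
    rw [key]; exact ⟨x, hx, rfl⟩
  have hfin : EMetric.hausdorffEdist ((F^[n] C : Set X)) ({y} : Set X) ≠ ⊤ :=
    Metric.hausdorffEdist_ne_top_of_nonempty_of_bounded (F^[n] C).nonempty
      (Set.singleton_nonempty y) (F^[n] C).isCompact.isBounded Bornology.isBounded_singleton
  have h1 : Metric.infDist (f^[n] x) ({y} : Set X) ≤
      Metric.hausdorffDist ((F^[n] C : Set X)) ({y} : Set X) :=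
    Metric.infDist_le_hausdorffDist_of_mem hmem hfin
  rw [Metric.infDist_singleton] at h1
  have h2 : dist (F^[n] C) Y < r := Metric.mem_ball.1 hA1
  rw [Metric.NonemptyCompacts.dist_eq] at h2
  exact Metric.mem_ball.2 (lt_of_le_of_lt h1 h2)
end

section
/- If (B_i) is a sequence in 2^X (X a compact metric space) converging in the Hausdorff metric to a totally disconnected compact set C, then the component diameters Cdiam(B_i) converge to 0, where Cdiam(B) is the supremum of the diameters of the connected components of B. -/
/-!
Cover the totally disconnected compactum `C` by finitely many clopen pieces of diameter `< ε`.
By compactness, points of `C` closer than some `η` lie in the same piece, so the `η/2`-thickenings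
of the pieces are pairwise disjoint open sets. A set `B` Hausdorff-close to `C` lies in their union,
hence each connected component of `B` lies in a single one of them and has diameter `< ε + η`.
-/

open TopologicalSpace Filter Metric Set
open scoped Function

section CompactTotallyDisconnected

variable {Y : Type*} [MetricSpace Y] [CompactSpace Y]

theorem exists_continuous_fin_dist_lt_of_eq [TotallyDisconnectedSpace Y] {ε : ℝ} (hε : 0 < ε) :
    ∃ (n : ℕ) (g : Y → Fin n), Continuous g ∧ ∀ x y, g x = g y → dist x y < ε := by
  have hS : {p : Y × Y | dist p.1 p.2 < ε / 2} ∈ nhdsSet (diagonal Y) :=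
    (isOpen_lt continuous_dist continuous_const).mem_nhdsSet.2 fun p (hp : p.1 = p.2) => by
      simp [hp, hε]
  obtain ⟨n, g, c, hg, hc⟩ :=
    (ContinuousMap.id Y).exists_finite_approximation_of_mem_nhds_diagonal hS
  refine ⟨n, g, hg, fun x y hxy => ?_⟩
  have hx : dist x (c (g x)) < ε / 2 := hc x
  have hy : dist y (c (g x)) < ε / 2 := hxy ▸ hc y
  linarith [dist_triangle_right x y (c (g x))]

theorem exists_pos_eq_of_dist_lt {ι : Type*} [TopologicalSpace ι] [DiscreteTopology ι]
    {g : Y → ι} (hg : Continuous g) : ∃ η > 0, ∀ x y, dist x y < η → g x = g y := by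
  obtain ⟨η, hη, hball⟩ := lebesgue_number_lemma_of_metric isCompact_univ
    (c := fun i => g ⁻¹' {i}) (fun i => (isOpen_discrete _).preimage hg)
    (fun x _ => mem_iUnion.2 ⟨g x, rfl⟩)
  refine ⟨η, hη, fun x y hxy => ?_⟩
  obtain ⟨i, hi⟩ := hball x (mem_univ x)
  exact (hi (mem_ball_self hη)).trans (hi (mem_ball'.2 hxy)).symm

end CompactTotallyDisconnected

theorem IsPreconnected.exists_subset_of_pairwise_disjoint {α ι : Type*} [TopologicalSpace α]
    {K : Set α} (hK : IsPreconnected K) {V : ι → Set α} (hV : ∀ i, IsOpen (V i))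
    (hdisj : Pairwise (Disjoint on V)) (hKV : K ⊆ ⋃ i, V i) {x : α} (hx : x ∈ K) :
    ∃ i, K ⊆ V i := by
  obtain ⟨i, hxi⟩ := mem_iUnion.1 (hKV hx)
  refine ⟨i, hK.subset_left_of_subset_union (hV i)
    (isOpen_biUnion fun j _ => hV j) (disjoint_iUnion₂_right.2 fun j hj => hdisj (Ne.symm hj))
    (fun y hy => ?_) ⟨x, hx, hxi⟩⟩
  obtain ⟨j, hyj⟩ := mem_iUnion.1 (hKV hy)
  rcases eq_or_ne j i with rfl | hji
  · exact Or.inl hyj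
  · exact Or.inr (mem_biUnion hji hyj)

section Components

variable {X : Type*} [MetricSpace X]

theorem IsPreconnected.dist_lt_of_subset_thickening {C : Set X} {ι : Type*} {g : C → ι}
    {ε η : ℝ} (hsmall : ∀ c c', g c = g c' → dist c c' < ε)
    (hloc : ∀ c c' : C, dist c c' < η → g c = g c')
    {K : Set X} (hK : IsPreconnected K) (hKC : K ⊆ thickening (η / 2) C)
    {x y : X} (hx : x ∈ K) (hy : y ∈ K) : dist x y < ε + η := by
  set V : ι → Set X := fun i => ⋃ (c : C) (_ : g c = i), ball (c : X) (η / 2)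
  have hV : ∀ i, IsOpen (V i) := fun i => isOpen_biUnion fun _ _ => isOpen_ball
  have hdisj : Pairwise (Disjoint on V) := by
    intro i j hij
    refine disjoint_left.2 fun z hzi hzj => hij ?_
    simp only [V, mem_iUnion, mem_ball, exists_prop] at hzi hzj
    obtain ⟨c, rfl, hc⟩ := hzi
    obtain ⟨c', rfl, hc'⟩ := hzj
    refine hloc c c' ?_
    rw [Subtype.dist_eq]
    linarith [dist_triangle (c : X) z c', dist_comm z (c : X)]
  have hKV : K ⊆ ⋃ i, V i := fun z hz => by
    obtain ⟨c, hc, hzc⟩ := mem_thickening_iff.1 (hKC hz)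
    simp only [V, mem_iUnion, mem_ball, exists_prop]
    exact ⟨_, ⟨c, hc⟩, rfl, hzc⟩
  obtain ⟨i, hKi⟩ := hK.exists_subset_of_pairwise_disjoint hV hdisj hKV hx
  have hxi := hKi hx
  have hyi := hKi hy
  simp only [V, mem_iUnion, mem_ball, exists_prop] at hxi hyi
  obtain ⟨c, rfl, hxc⟩ := hxi
  obtain ⟨c', hcc', hyc'⟩ := hyi
  have hcc := hsmall c c' hcc'.symm
  rw [Subtype.dist_eq] at hcc
  linarith [dist_triangle4 x c c' y, dist_comm y (c' : X)]

theorem IsCompact.exists_pos_dist_lt_of_isPreconnected {C : Set X} (hCc : IsCompact C)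
    (hC : IsTotallyDisconnected C) {ε : ℝ} (hε : 0 < ε) :
    ∃ δ > 0, ∀ K ⊆ thickening δ C, IsPreconnected K →
      ∀ x ∈ K, ∀ y ∈ K, dist x y < ε := by
  have : CompactSpace C := isCompact_iff_compactSpace.1 hCc
  have : TotallyDisconnectedSpace C := totallyDisconnectedSpace_subtype_iff.2 hC
  obtain ⟨n, g, hg, hsmall⟩ := exists_continuous_fin_dist_lt_of_eq (Y := C) (half_pos hε)
  obtain ⟨η, hη, hloc⟩ := exists_pos_eq_of_dist_lt hg
  refine ⟨min η (ε / 2) / 2, by positivity, fun K hKC hK _ hx _ hy => ?_⟩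
  have := hK.dist_lt_of_subset_thickening hsmall
    (fun c c' h => hloc c c' (h.trans_le (min_le_left _ _))) hKC hx hy
  linarith [min_le_right η (ε / 2)]

theorem TopologicalSpace.NonemptyCompacts.subset_thickening_of_dist_lt
    {B C : NonemptyCompacts X} {δ : ℝ} (h : dist B C < δ) :
    (B : Set X) ⊆ thickening δ C := fun _ hx =>
  mem_thickening_iff.2 (exists_dist_lt_of_hausdorffDist_lt hx h (edist_ne_top B C))

end Components

/-- If a sequence `(B_i)` in `2^X` (with `X` a compact metric space) converges in the
Hausdorff metric to a totally disconnected compact set `C`, then the component diameters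
`Cdiam(B_i) = sup {d(x,y) : x, y in the same connected component of B_i}` tend to `0`. -/
theorem stmt_18 (X : Type*) [MetricSpace X] [CompactSpace X]
    (B : ℕ → NonemptyCompacts X) (C : NonemptyCompacts X)
    (hC : IsTotallyDisconnected (C : Set X))
    (hconv : Tendsto B atTop (nhds C)) :
    Tendsto (fun i =>
        sSup {r : ℝ | ∃ x ∈ (B i : Set X), ∃ y ∈ (B i : Set X),
          connectedComponentIn (B i : Set X) x = connectedComponentIn (B i : Set X) y ∧
          r = dist x y})
      atTop (nhds 0) := by
  refine tendsto_order.2 ⟨fun a ha => Eventually.of_forall fun i =>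
    ha.trans_le (Real.sSup_nonneg ?_), fun a ha => ?_⟩
  · rintro _ ⟨x, -, y, -, -, rfl⟩
    exact dist_nonneg
  obtain ⟨δ, hδ, hsmall⟩ := C.isCompact.exists_pos_dist_lt_of_isPreconnected hC (half_pos ha)
  filter_upwards [Metric.tendsto_nhds.1 hconv δ hδ] with i hi
  refine (Real.sSup_le ?_ (half_pos ha).le).trans_lt (half_lt_self ha)
  rintro _ ⟨x, hx, y, hy, hxy, rfl⟩
  exact (hsmall _ ((connectedComponentIn_subset _ _).trans ((B i).subset_thickening_of_dist_lt hi))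
    isPreconnected_connectedComponentIn x (mem_connectedComponentIn hx) y
    (hxy ▸ mem_connectedComponentIn hy)).le
end

section
/- For a dynamical system (X,f) with X compact metric: (X,f) is exact (for every nonempty open U there exists n with f^n(U) = X) if and only if the induced system (2^X, f_*) is exact. -/
open TopologicalSpace Metric Set Filter

/-!
If `f` is exact, then `f` is surjective, so once `f^[n]` maps an open set onto `X` so do all later
iterates; hence finitely many `ε/3`-balls centred in a compact set `A` are all mapped onto `X` by a
common iterate `f^[N]`. For any target `K`, the compact set `B` of points of `f^[N]⁻¹' K` lying
in the corresponding closed balls satisfies `f^[N] '' B = K` and is `2ε/3`-close to `A` in the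
Hausdorff metric, so `f_*^N` maps the Hausdorff `ε`-ball around `A` onto `2^X`.
Conversely, a compact set Hausdorff-close to the singleton `{x}` lies in a small ball around `x`,
so exactness of `f_*` at `{x}` gives exactness of `f` at every open set containing `x`.
-/

def IsTopologicallyExact {X : Type*} [TopologicalSpace X] (f : X → X) : Prop :=
  ∀ U : Set X, IsOpen U → U.Nonempty → ∃ n : ℕ, f^[n] '' U = univ

theorem Function.Surjective.iterate_image_eq_univ_of_le {X : Type*} {f : X → X}
    (hsurj : Function.Surjective f) {U : Set X} {n m : ℕ} (hn : f^[n] '' U = univ)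
    (hnm : n ≤ m) : f^[m] '' U = univ := by
  rw [← Nat.sub_add_cancel hnm, Function.iterate_add, image_comp, hn, image_univ,
    (hsurj.iterate _).range_eq]

theorem NonemptyCompacts.coe_iterate_of_coe_eq_image {X : Type*} [TopologicalSpace X]
    {f : X → X} {F : NonemptyCompacts X → NonemptyCompacts X}
    (hF : ∀ A : NonemptyCompacts X, (F A : Set X) = f '' A) (n : ℕ) (A : NonemptyCompacts X) :
    (F^[n] A : Set X) = f^[n] '' A := by
  induction n with
  | zero => simp
  | succ n ih => rw [Function.iterate_succ_apply', hF, ih, ← image_comp, ← Function.iterate_succ']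

namespace IsTopologicallyExact

variable {X : Type*} [TopologicalSpace X] {f : X → X}

theorem surjective [T1Space X] (hf : IsTopologicallyExact f) : Function.Surjective f := by
  cases subsingleton_or_nontrivial X with
  | inl _ => exact fun y => ⟨y, Subsingleton.elim _ _⟩
  | inr _ =>
    obtain ⟨a⟩ := ‹Nontrivial X›.to_nonempty
    obtain ⟨n, hn⟩ := hf {a}ᶜ isOpen_compl_singleton (nonempty_compl_of_nontrivial a)
    obtain ⟨k, rfl⟩ : ∃ k, n = k + 1 := by
      have ha : a ∈ f^[n] '' {a}ᶜ := hn ▸ mem_univ a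
      refine Nat.exists_eq_succ_of_ne_zero fun h => ?_
      simp [h] at ha
    intro y
    obtain ⟨z, -, hz⟩ : y ∈ f^[k + 1] '' {a}ᶜ := hn ▸ mem_univ y
    exact ⟨f^[k] z, by rwa [Function.iterate_succ_apply'] at hz⟩

theorem eventually_iterate_image_eq_univ [T1Space X] (hf : IsTopologicallyExact f) {U : Set X}
    (hU : IsOpen U) (hUne : U.Nonempty) : ∀ᶠ n in atTop, f^[n] '' U = univ := by
  obtain ⟨n, hn⟩ := hf U hU hUne
  exact eventually_atTop.2 ⟨n, fun _ => hf.surjective.iterate_image_eq_univ_of_le hn⟩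

end IsTopologicallyExact

section Metric

variable {X : Type*} [MetricSpace X]

theorem exists_nonemptyCompacts_dist_le_and_image_eq [CompactSpace X] {g : X → X}
    (hg : Continuous g) {A : NonemptyCompacts X} {t : Set X} {δ : ℝ} (ht : t.Finite)
    (htA : t ⊆ A) (hAt : (A : Set X) ⊆ ⋃ x ∈ t, ball x δ) (hgt : ∀ x ∈ t, g '' ball x δ = univ)
    (K : NonemptyCompacts X) :
    ∃ B : NonemptyCompacts X, dist B A ≤ 2 * δ ∧ g '' B = K := by
  set B : Set X := g ⁻¹' K ∩ ⋃ x ∈ t, closedBall x δ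
  have hB : ∀ x ∈ t, ∀ y ∈ K, ∃ z ∈ B, dist z x < δ ∧ g z = y := by
    intro x hx y hy
    obtain ⟨z, hz, rfl⟩ : y ∈ g '' ball x δ := hgt x hx ▸ mem_univ y
    exact ⟨z, ⟨hy, mem_biUnion hx (ball_subset_closedBall hz)⟩, hz, rfl⟩
  obtain ⟨a₀, ha₀⟩ := A.nonempty
  obtain ⟨x₀, hx₀, -⟩ := mem_iUnion₂.1 (hAt ha₀)
  obtain ⟨y₀, hy₀⟩ := K.nonempty
  have hδ : 0 ≤ δ := by
    obtain ⟨_, -, hz, -⟩ := hB x₀ hx₀ y₀ hy₀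
    exact dist_nonneg.trans hz.le
  have hBclosed : IsClosed B :=
    (K.isCompact.isClosed.preimage hg).inter (ht.isClosed_biUnion fun _ _ => isClosed_closedBall)
  refine ⟨⟨⟨B, hBclosed.isCompact⟩, (hB x₀ hx₀ y₀ hy₀).imp fun _ h => h.1⟩, ?_, ?_⟩
  · refine hausdorffDist_le_of_mem_dist (by linarith) (fun b hb => ?_) (fun a ha => ?_)
    · obtain ⟨x, hx, hbx⟩ := mem_iUnion₂.1 hb.2
      exact ⟨x, htA hx, (mem_closedBall.1 hbx).trans (by linarith)⟩
    · obtain ⟨x, hx, hax⟩ := mem_iUnion₂.1 (hAt ha)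
      obtain ⟨z, hzB, hzx, -⟩ := hB x hx y₀ hy₀
      refine ⟨z, hzB, ?_⟩
      calc dist a z ≤ dist a x + dist z x := dist_triangle_right a z x
        _ ≤ 2 * δ := by linarith [mem_ball.1 hax]
  · refine (image_subset_iff.2 inter_subset_left).antisymm fun y hy => ?_
    obtain ⟨z, hzB, -, rfl⟩ := hB x₀ hx₀ y hy
    exact mem_image_of_mem g hzB

theorem IsTopologicallyExact.nonemptyCompacts [CompactSpace X] {f : X → X} (hf : Continuous f)
    {F : NonemptyCompacts X → NonemptyCompacts X}
    (hF : ∀ A : NonemptyCompacts X, (F A : Set X) = f '' A) (hexact : IsTopologicallyExact f) :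
    IsTopologicallyExact F := by
  rintro 𝒰 h𝒰 ⟨A, hA⟩
  obtain ⟨ε, hε, hA𝒰⟩ := Metric.isOpen_iff.1 h𝒰 A hA
  obtain ⟨t, htA, ht, hAt⟩ := A.isCompact.finite_cover_balls (e := ε / 3) (by positivity)
  obtain ⟨N, hN⟩ : ∃ N, ∀ x ∈ t, f^[N] '' ball x (ε / 3) = univ :=
    ((eventually_all_finite ht).2 fun x _ => hexact.eventually_iterate_image_eq_univ isOpen_ball
      (nonempty_ball.2 (by positivity))).exists
  refine ⟨N, eq_univ_of_forall fun K => ?_⟩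
  obtain ⟨B, hBA, hBK⟩ :=
    exists_nonemptyCompacts_dist_le_and_image_eq (hf.iterate N) ht htA hAt hN K
  refine ⟨B, hA𝒰 (hBA.trans_lt (by linarith)), NonemptyCompacts.ext ?_⟩
  rw [NonemptyCompacts.coe_iterate_of_coe_eq_image hF, hBK]

theorem NonemptyCompacts.subset_ball_of_dist_singleton_lt {A : NonemptyCompacts X} {x : X}
    {r : ℝ} (hA : dist A {x} < r) : (A : Set X) ⊆ ball x r := fun a ha => by
  rw [mem_ball, ← infDist_singleton]
  exact (infDist_le_hausdorffDist_of_mem ha (edist_ne_top A {x})).trans_lt hA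

theorem IsTopologicallyExact.of_nonemptyCompacts [CompactSpace X] {f : X → X}
    {F : NonemptyCompacts X → NonemptyCompacts X}
    (hF : ∀ A : NonemptyCompacts X, (F A : Set X) = f '' A) (hexact : IsTopologicallyExact F) :
    IsTopologicallyExact f := by
  rintro U hU ⟨x, hx⟩
  obtain ⟨r, hr, hxU⟩ := Metric.isOpen_iff.1 hU x hx
  have : Nonempty X := ⟨x⟩
  obtain ⟨n, hn⟩ := hexact (ball {x} r) isOpen_ball ⟨{x}, mem_ball_self hr⟩
  obtain ⟨A, hAx, hAtop⟩ : ⊤ ∈ F^[n] '' ball {x} r := hn ▸ mem_univ ⊤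
  have hAuniv : f^[n] '' A = univ := by
    rw [← NonemptyCompacts.coe_iterate_of_coe_eq_image hF, hAtop, NonemptyCompacts.coe_top]
  refine ⟨n, univ_subset_iff.1 (hAuniv ▸ image_mono ?_)⟩
  exact (NonemptyCompacts.subset_ball_of_dist_singleton_lt hAx).trans hxU

end Metric

/-- `(X,f)` is exact (every nonempty open set has some forward iterate equal to all of `X`)
if and only if the induced system `(2^X, f_*)` is exact. -/
theorem stmt_19 (X : Type*) [MetricSpace X] [CompactSpace X] (f : X → X) (hf : Continuous f)
    (F : NonemptyCompacts X → NonemptyCompacts X)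
    (hF : ∀ A : NonemptyCompacts X, (F A : Set X) = f '' (A : Set X)) :
    (∀ U : Set X, IsOpen U → U.Nonempty → ∃ n : ℕ, f^[n] '' U = Set.univ) ↔
    (∀ U : Set (NonemptyCompacts X), IsOpen U → U.Nonempty →
      ∃ n : ℕ, F^[n] '' U = Set.univ) :=
  ⟨IsTopologicallyExact.nonemptyCompacts hf hF, IsTopologicallyExact.of_nonemptyCompacts hF⟩
end
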